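/- arXiv:1707.04379 — 3 statements merged into one kernel-verified Lean document; each statement's English description precedes it below -/
import Mathlib

section
/- For any positive integer k, Σ_{i+t ≤ ⌊k/2⌋} B_{2t} · 2^{2t} · (2k+2)! / ((2t)! (2i+1)! (2k-2t-2i+1)!) = (k+1) · (2^{2k} + (-1)^k · C(2k, k)), where the sum ranges over all nonnegative integers i, t with i + t ≤ ⌊k/2⌋. -/
/-!
Put `m = i + t`. The trinomial coefficient factors as `C(2m+1, 2t) · C(2k+2, 2m+1)`, and the inner
sum `∑ₜ C(2m+1, 2t) 4ᵗ B_{2t}` equals `2m+1`: this is the odd-`n` case of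
`∑ⱼ C(n, j) 2ʲ Bⱼ = (2 - 2ⁿ) Bₙ`, the coefficient form of `B(2x) eˣ = 2 B(x) - B(2x)` for
`B(x) = x / (eˣ - 1)`, once the odd Bernoulli numbers (all zero except `B₁ = -1/2`) are split off.
What remains is `(2k+2) ∑_{2m ≤ k} C(2k+1, 2m)`, and twice this partial sum of even-index
binomial coefficients is the half row sum `4ᵏ` plus the alternating partial sum `(-1)ᵏ C(2k, k)`.
-/

open Nat Finset PowerSeries

theorem rescale_two_bernoulliPowerSeries_mul_exp :
    rescale (2 : ℚ) (bernoulliPowerSeries ℚ) * exp ℚ =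
      2 * bernoulliPowerSeries ℚ - rescale (2 : ℚ) (bernoulliPowerSeries ℚ) := by
  set B := bernoulliPowerSeries ℚ
  have hB : B * (exp ℚ - 1) = X := bernoulliPowerSeries_mul_exp_sub_one ℚ
  have hB2 : rescale (2 : ℚ) B * (exp ℚ ^ 2 - 1) = 2 * X := by
    have h := congrArg (rescale (2 : ℚ)) hB
    rw [map_mul, map_sub, map_one, ← Nat.cast_ofNat, ← exp_pow_eq_rescale_exp] at h
    rw [Nat.cast_ofNat, rescale_X, map_ofNat] at h
    exact h
  have hexp : exp ℚ - 1 ≠ 0 := fun h => by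
    simpa [coeff_exp] using congrArg (coeff 1) h
  refine mul_right_cancel₀ hexp ?_
  linear_combination hB2 - 2 * hB

theorem sum_choose_mul_two_pow_mul_bernoulli (n : ℕ) :
    ∑ j ∈ range (n + 1), (n.choose j : ℚ) * 2 ^ j * bernoulli j = (2 - 2 ^ n) * bernoulli n := by
  have h := congrArg (coeff n) rescale_two_bernoulliPowerSeries_mul_exp
  rw [coeff_mul, Nat.sum_antidiagonal_eq_sum_range_succ_mk, map_sub, two_mul, map_add] at h
  simp only [coeff_rescale, bernoulliPowerSeries, coeff_mk, coeff_exp,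
    Algebra.algebraMap_self, RingHom.id_apply] at h
  calc ∑ j ∈ range (n + 1), (n.choose j : ℚ) * 2 ^ j * bernoulli j
      = n ! * ∑ j ∈ range (n + 1), 2 ^ j * (bernoulli j / j !) * (1 / (n - j)! : ℚ) := by
        rw [mul_sum]
        refine sum_congr rfl fun j hj => ?_
        rw [Nat.cast_choose ℚ (mem_range_succ_iff.mp hj)]
        field_simp
    _ = (2 - 2 ^ n) * bernoulli n := by
        rw [h]
        field_simp
        ring

theorem Finset.sum_range_two_mul {M : Type*} [AddCommMonoid M] (f : ℕ → M) (n : ℕ) :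
    ∑ j ∈ range (2 * n), f j = ∑ t ∈ range n, (f (2 * t) + f (2 * t + 1)) := by
  induction n with
  | zero => simp
  | succ n ih => rw [mul_add_one, sum_range_succ, sum_range_succ, sum_range_succ, ih, add_assoc]

theorem two_mul_sum_range_even {R : Type*} [CommRing R] (f : ℕ → R) (n : ℕ) :
    2 * ∑ m ∈ range (n / 2 + 1), f (2 * m) = ∑ j ∈ range (n + 1), (1 + (-1) ^ j) * f j := by
  have hpair (t : ℕ) :
      (1 + (-1) ^ (2 * t)) * f (2 * t) + (1 + (-1) ^ (2 * t + 1)) * f (2 * t + 1) =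
        2 * f (2 * t) := by
    rw [pow_succ, pow_mul, neg_one_sq, one_pow]
    ring
  obtain ⟨s, rfl | rfl⟩ := Nat.even_or_odd' n
  · rw [sum_range_succ _ (2 * s), sum_range_two_mul, sum_congr rfl fun t _ => hpair t,
      Nat.mul_div_cancel_left s two_pos, sum_range_succ, mul_add, mul_sum, pow_mul, neg_one_sq,
      one_pow, one_add_one_eq_two]
  · rw [show 2 * s + 1 + 1 = 2 * (s + 1) by ring, sum_range_two_mul,
      sum_congr rfl fun t _ => hpair t, mul_sum, show (2 * s + 1) / 2 = s by omega]

theorem sum_choose_two_mul_mul_two_pow_mul_bernoulli (m : ℕ) :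
    ∑ t ∈ range (m + 1), ((2 * m + 1).choose (2 * t) : ℚ) * 2 ^ (2 * t) * bernoulli (2 * t) =
      2 * m + 1 := by
  have h := sum_choose_mul_two_pow_mul_bernoulli (2 * m + 1)
  have hrhs : (2 - 2 ^ (2 * m + 1)) * bernoulli (2 * m + 1) = 0 := by
    rcases m with _ | m
    · norm_num
    · rw [bernoulli_eq_zero_of_odd (odd_two_mul_add_one _) (by omega), mul_zero]
  have hodd : ∑ t ∈ range (m + 1),
      ((2 * m + 1).choose (2 * t + 1) : ℚ) * 2 ^ (2 * t + 1) * bernoulli (2 * t + 1) =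
        -(2 * m + 1) := by
    rw [sum_eq_single 0 (fun t _ ht => by
      rw [bernoulli_eq_zero_of_odd (odd_two_mul_add_one _) (by omega), mul_zero])
      (by simp)]
    rw [mul_zero, zero_add, choose_one_right, pow_one, bernoulli_one]
    push_cast
    ring
  rw [hrhs, show 2 * m + 1 + 1 = 2 * (m + 1) by ring, sum_range_two_mul, sum_add_distrib,
    hodd] at h
  linear_combination h

theorem two_mul_sum_choose_two_mul_add_one_even (k : ℕ) :
    2 * ∑ m ∈ range (k / 2 + 1), ((2 * k + 1).choose (2 * m) : ℚ) =
      2 ^ (2 * k) + (-1) ^ k * (2 * k).choose k := by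
  have hhalf : ∑ j ∈ range (k + 1), ((2 * k + 1).choose j : ℚ) = 2 ^ (2 * k) := by
    rw [pow_mul]
    exact_mod_cast sum_range_choose_halfway k
  have halt : ∑ j ∈ range (k + 1), (-1) ^ j * ((2 * k + 1).choose j : ℚ) =
      (-1) ^ k * (2 * k).choose k := by
    exact_mod_cast Int.alternating_sum_range_choose_eq_choose
  rw [two_mul_sum_range_even (fun j => ((2 * k + 1).choose j : ℚ)), ← hhalf, ← halt,
    ← sum_add_distrib]
  exact sum_congr rfl fun j _ => one_add_mul _ _

theorem factorial_div_factorial_mul_factorial_mul_factorial {a b c n N : ℕ} (hn : a + b = n)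
    (hN : n + c = N) :
    (N ! : ℚ) / (a ! * b ! * c !) = n.choose a * N.choose n := by
  subst hn hN
  rw [Nat.cast_choose ℚ (le_add_right le_rfl), Nat.cast_choose ℚ (le_add_right le_rfl),
    Nat.add_sub_cancel_left, Nat.add_sub_cancel_left]
  field_simp

theorem sum_bernoulli_trinomial_of_le {m k : ℕ} (hmk : m ≤ k) :
    ∑ t ∈ range (m + 1), (bernoulli (2 * t) : ℚ) * 2 ^ (2 * t) * (2 * k + 2)! /
        ((2 * t)! * (2 * (m - t) + 1)! * (2 * (k - m) + 1)!) =
      (2 * k + 2) * (2 * k + 1).choose (2 * m) := by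
  have hterm : ∀ t ∈ range (m + 1), (bernoulli (2 * t) : ℚ) * 2 ^ (2 * t) * (2 * k + 2)! /
        ((2 * t)! * (2 * (m - t) + 1)! * (2 * (k - m) + 1)!) =
      (2 * m + 1).choose (2 * t) * 2 ^ (2 * t) * bernoulli (2 * t) *
        (2 * k + 2).choose (2 * m + 1) := by
    intro t ht
    have ht : t ≤ m := mem_range_succ_iff.mp ht
    rw [mul_div_assoc,
      factorial_div_factorial_mul_factorial_mul_factorial (n := 2 * m + 1) (by omega) (by omega)]
    ring
  have hchoose : ((2 * k + 2).choose (2 * m + 1) : ℚ) * (2 * m + 1) =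
      (2 * k + 2) * (2 * k + 1).choose (2 * m) := by
    exact_mod_cast (add_one_mul_choose_eq (2 * k + 1) (2 * m)).symm
  rw [sum_congr rfl hterm, ← sum_mul, sum_choose_two_mul_mul_two_pow_mul_bernoulli, ← hchoose,
    mul_comm]

theorem bernoulli_trinomial_identity_general (k : ℕ) :
    ∑ t ∈ Finset.range (k / 2 + 1), ∑ i ∈ Finset.range (k / 2 - t + 1),
        (bernoulli (2 * t) : ℚ) * 2 ^ (2 * t) *
          ((2 * k + 2).factorial : ℚ) /
            (((2 * t).factorial : ℚ) * ((2 * i + 1).factorial : ℚ) *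
              ((2 * k - 2 * t - 2 * i + 1).factorial : ℚ)) =
      (k + 1) * (2 ^ (2 * k) + (-1) ^ k * ((2 * k).choose k : ℚ)) := by
  set F : ℕ → ℕ → ℚ := fun t i => bernoulli (2 * t) * 2 ^ (2 * t) * (2 * k + 2)! /
    ((2 * t)! * (2 * i + 1)! * (2 * k - 2 * t - 2 * i + 1)!)
  calc ∑ t ∈ range (k / 2 + 1), ∑ i ∈ range (k / 2 - t + 1), F t i
      = ∑ t ∈ range (k / 2 + 1), ∑ i ∈ range (k / 2 + 1 - t), F t i :=
        sum_congr rfl fun t ht => by rw [Nat.sub_add_comm (mem_range_succ_iff.mp ht)]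
    _ = ∑ m ∈ range (k / 2 + 1), ∑ t ∈ range (m + 1), F t (m - t) :=
        (sum_range_diag_flip _ F).symm
    _ = ∑ m ∈ range (k / 2 + 1), (2 * k + 2) * ((2 * k + 1).choose (2 * m) : ℚ) := by
        refine sum_congr rfl fun m hm => ?_
        have hmk : m ≤ k := (mem_range_succ_iff.mp hm).trans (Nat.div_le_self k 2)
        rw [← sum_bernoulli_trinomial_of_le hmk]
        refine sum_congr rfl fun t ht => ?_
        simp only [F]
        rw [show 2 * k - 2 * t - 2 * (m - t) + 1 = 2 * (k - m) + 1 by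
          have := mem_range_succ_iff.mp ht; omega]
    _ = (k + 1) * (2 ^ (2 * k) + (-1) ^ k * ((2 * k).choose k : ℚ)) := by
        rw [← mul_sum, ← two_mul_sum_choose_two_mul_add_one_even]
        ring

theorem bernoulli_trinomial_identity (k : ℕ) (hk : 0 < k) :
    ∑ t ∈ Finset.range (k / 2 + 1), ∑ i ∈ Finset.range (k / 2 - t + 1),
        (bernoulli (2 * t) : ℚ) * 2 ^ (2 * t) *
          ((2 * k + 2).factorial : ℚ) /
            (((2 * t).factorial : ℚ) * ((2 * i + 1).factorial : ℚ) *
              ((2 * k - 2 * t - 2 * i + 1).factorial : ℚ)) =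
      (k + 1) * (2 ^ (2 * k) + (-1) ^ k * ((2 * k).choose k : ℚ)) :=
  bernoulli_trinomial_identity_general k
end

section
/- For any positive integer k, Σ_{m=⌊k/2⌋+1}^{k} (2m+1) · C(2k+2, 2m+1) = (k+1) · (2^{2k} - (-1)^k · C(2k, k)). -/
/-!
Since `(2m+1) C(2k+2, 2m+1) = (2k+2) C(2k+1, 2m)`, the sum is `2(k+1)` times the sum of the
even-index entries `C(2k+1, j)` with `k < j ≤ 2k`. Filtering even indices through the weight
`(1 + (-1)^j) / 2`, the even entries of the whole row add up to `2^(2k)`, while those with `j ≤ k`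
add up to `(4^k + (-1)^k C(2k, k)) / 2`, by the halfway sum `∑_{j ≤ k} C(2k+1, j) = 4^k` and the
partial alternating sum `∑_{j ≤ k} (-1)^j C(2k+1, j) = (-1)^k C(2k, k)`.
-/

open Finset

theorem two_mul_sum_even_indices {R : Type*} [CommRing R] (f : ℕ → R) (n : ℕ) :
    2 * ∑ i ∈ range (n / 2 + 1), f (2 * i) = ∑ j ∈ range (n + 1), (1 + (-1) ^ j) * f j := by
  induction n with
  | zero => simp only [Nat.zero_div, zero_add, sum_range_one, mul_zero, pow_zero]; ring
  | succ n ih =>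
    rw [sum_range_succ _ (n + 1), ← ih]
    rcases Nat.even_or_odd n with ⟨t, rfl⟩ | ⟨t, rfl⟩
    · have hdiv : (t + t + 1) / 2 = (t + t) / 2 := by omega
      rw [hdiv, pow_succ, Even.neg_one_pow ⟨t, rfl⟩]
      ring
    · have hdiv : (2 * t + 1 + 1) / 2 = (2 * t + 1) / 2 + 1 := by omega
      have hpow : (-1 : R) ^ (2 * t + 1 + 1) = 1 := Even.neg_one_pow ⟨t + 1, by ring⟩
      rw [hdiv, sum_range_succ, hpow, show 2 * ((2 * t + 1) / 2 + 1) = 2 * t + 1 + 1 by omega]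
      ring

theorem two_mul_sum_range_choose_even {n : ℕ} (hn : n ≠ 0) :
    2 * ∑ i ∈ range (n / 2 + 1), (n.choose (2 * i) : ℤ) = 2 ^ n := by
  refine (two_mul_sum_even_indices (fun j => (n.choose j : ℤ)) n).trans ?_
  simp only [add_mul, one_mul, sum_add_distrib, Int.alternating_sum_range_choose_of_ne hn]
  exact_mod_cast Nat.sum_range_choose n

theorem two_mul_sum_range_choose_even_halfway (k : ℕ) :
    2 * ∑ i ∈ range (k / 2 + 1), ((2 * k + 1).choose (2 * i) : ℤ) =
      4 ^ k + (-1) ^ k * (2 * k).choose k := by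
  refine (two_mul_sum_even_indices (fun j => ((2 * k + 1).choose j : ℤ)) k).trans ?_
  simp only [add_mul, one_mul, sum_add_distrib, Int.alternating_sum_range_choose_eq_choose]
  congr 1
  exact_mod_cast Nat.sum_range_choose_halfway k

theorem sum_upper_odd_binomials_general (k : ℕ) :
    ∑ m ∈ Finset.Icc (k / 2 + 1) k, ((2 * m + 1 : ℤ)) * ((2 * k + 2).choose (2 * m + 1) : ℤ) =
      (k + 1) * (2 ^ (2 * k) - (-1) ^ k * ((2 * k).choose k : ℤ)) := by
  have absorb (m : ℕ) : (2 * m + 1 : ℤ) * (2 * k + 2).choose (2 * m + 1) =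
      (2 * k + 2) * (2 * k + 1).choose (2 * m) := by
    rw [show 2 * k + 2 = 2 * k + 1 + 1 from rfl, mul_comm]
    exact_mod_cast (Nat.add_one_mul_choose_eq (2 * k + 1) (2 * m)).symm
  have hrow := two_mul_sum_range_choose_even (n := 2 * k + 1) (by omega)
  rw [show (2 * k + 1) / 2 = k by omega] at hrow
  have hhalf := two_mul_sum_range_choose_even_halfway k
  have hfour : (4 : ℤ) ^ k = 2 ^ (2 * k) := by rw [pow_mul]; norm_num
  rw [sum_congr rfl fun m _ => absorb m, ← mul_sum, ← Ico_add_one_right_eq_Icc,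
    sum_Ico_eq_sub _ (by omega)]
  linear_combination (k + 1 : ℤ) * (hrow - hhalf - hfour)

theorem sum_upper_odd_binomials (k : ℕ) (hk : 0 < k) :
    ∑ m ∈ Finset.Icc (k / 2 + 1) k, ((2 * m + 1 : ℤ)) * ((2 * k + 2).choose (2 * m + 1) : ℤ) =
      (k + 1) * (2 ^ (2 * k) - (-1) ^ k * ((2 * k).choose k : ℤ)) :=
  sum_upper_odd_binomials_general k
end

section
/- For any positive integer k, Σ_{i=0}^{⌊k/2⌋} C(2k+2, 2i+1) = 2^{2k} + e_k · C(2k+1, k), where e_k = 1 if k is even and e_k = 0 if k is odd. -/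
lemma pair_sum_aux (n m : ℕ) :
    ∑ j ∈ Finset.range (2 * m), n.choose j =
      ∑ i ∈ Finset.range m, (n.choose (2 * i) + n.choose (2 * i + 1)) := by
  induction m with
  | zero => simp
  | succ m ih =>
    rw [Finset.sum_range_succ, ← ih, show 2 * (m + 1) = (2 * m + 1) + 1 by ring,
      Finset.sum_range_succ, Finset.sum_range_succ, add_assoc]

theorem sum_lower_odd_binomials (k : ℕ) (hk : 0 < k) :
    ∑ i ∈ Finset.range (k / 2 + 1), (2 * k + 2).choose (2 * i + 1) =
      2 ^ (2 * k) + (if Even k then 1 else 0) * (2 * k + 1).choose k := by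
  have hstep : ∀ i, (2 * k + 2).choose (2 * i + 1) =
      (2 * k + 1).choose (2 * i) + (2 * k + 1).choose (2 * i + 1) := by
    intro i
    exact Nat.choose_succ_succ (2 * k + 1) (2 * i)
  rw [Finset.sum_congr rfl (fun i _ => hstep i), ← pair_sum_aux]
  have hhalf := Nat.sum_range_choose_halfway k
  rcases Nat.even_or_odd k with he | ho
  · obtain ⟨m, hm⟩ := he
    have hk2 : k / 2 = m := by omega
    rw [hk2, if_pos ⟨m, hm⟩, one_mul,
      show 2 * (m + 1) = (k + 1) + 1 by omega, Finset.sum_range_succ, hhalf,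
      show (2 * k + 1).choose (k + 1) = (2 * k + 1).choose k from by
        rw [← Nat.choose_symm (by omega : k + 1 ≤ 2 * k + 1)]; congr 1; omega]
    rw [show (4:ℕ) ^ k = 2 ^ (2 * k) by rw [pow_mul]; norm_num]
  · obtain ⟨m, hm⟩ := ho
    have hk2 : k / 2 = m := by omega
    rw [hk2, if_neg (by simp [Nat.odd_iff.mp ⟨m, hm⟩, Nat.even_iff]), zero_mul, add_zero,
      show 2 * (m + 1) = k + 1 by omega, hhalf,
      show (4:ℕ) ^ k = 2 ^ (2 * k) by rw [pow_mul]; norm_num]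
end
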